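/- arXiv:math/0702235 — 3 statements merged into one kernel-verified Lean document; each statement's English description precedes it below -/
import Mathlib

section
/- Let p ∈ (1,∞) and let ρ₀, ρ₁ be compactly supported probability densities on ℝ^d (nonnegative integrable functions with integral 1). Then there exists a maximizing pair (ū, v̄) of bounded continuous functions for the Kantorovich dual problem: ū(x) + v̄(y) ≤ |x−y|^p/p for all x, y ∈ ℝ^d, and ∫ ū ρ₀ dx + ∫ v̄ ρ₁ dy ≥ ∫ u ρ₀ dx + ∫ v ρ₁ dy for every pair of bounded continuous functions (u, v) with u(x) + v(y) ≤ |x−y|^p/p for all x, y. Moreover the maximizer can be chosen so that ū and v̄ are dual c-conjugates: ū(x) = inf_{y∈ℝ^d} (|x−y|^p/p − v̄(y)) for all x and v̄(y) = inf_{x∈ℝ^d} (|x−y|^p/p − ū(x)) for all y. -/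
open MeasureTheory Set

namespace KantorovichAux

variable {d : ℕ} {p C : ℝ}


/-- The cost function. -/
noncomputable def cost (p : ℝ) {d : ℕ} (x y : EuclideanSpace ℝ (Fin d)) : ℝ := ‖x - y‖ ^ p / p

lemma cost_nonneg (hp : 1 < p) (x y : EuclideanSpace ℝ (Fin d)) : 0 ≤ cost p x y :=
  div_nonneg (Real.rpow_nonneg (norm_nonneg _) _) (by linarith)

lemma cost_self (hp : 1 < p) (x : EuclideanSpace ℝ (Fin d)) : cost p x x = 0 := by
  simp [cost, Real.zero_rpow (by linarith : p ≠ 0)]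

lemma cost_symm (x y : EuclideanSpace ℝ (Fin d)) : cost p x y = cost p y x := by
  rw [cost, cost, norm_sub_rev]

/-- Mean value bound for rpow differences. -/
lemma abs_rpow_sub_rpow_le (hp : 1 < p) {a b M : ℝ} (ha : 0 ≤ a) (hb : 0 ≤ b)
    (haM : a ≤ M) (hbM : b ≤ M) :
    |a ^ p - b ^ p| ≤ p * M ^ (p - 1) * |a - b| := by
  have hp0 : (0:ℝ) < p := by linarith
  have hM : 0 ≤ M := le_trans ha haM
  have h := Convex.norm_image_sub_le_of_norm_hasDerivWithin_le
    (f := fun t : ℝ => t ^ p) (f' := fun t : ℝ => p * t ^ (p - 1)) (s := Icc (0:ℝ) M)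
    (C := p * M ^ (p - 1))
    (fun t ht => (Real.hasDerivAt_rpow_const (Or.inr hp.le)).hasDerivWithinAt)
    (fun t ht => by
      have h1 : (0:ℝ) ≤ t ^ (p-1) := Real.rpow_nonneg ht.1 _
      rw [Real.norm_eq_abs, abs_of_nonneg (by positivity : (0:ℝ) ≤ p * t ^ (p-1))]
      have : t ^ (p - 1) ≤ M ^ (p - 1) := Real.rpow_le_rpow ht.1 ht.2 (by linarith)
      nlinarith)
    (convex_Icc _ _) (⟨hb, hbM⟩ : b ∈ Icc (0:ℝ) M) (⟨ha, haM⟩ : a ∈ Icc (0:ℝ) M)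
  simpa [Real.norm_eq_abs] using h

lemma cost_sub_cost_le (hp : 1 < p) {x y y' : EuclideanSpace ℝ (Fin d)} {M : ℝ}
    (h1 : ‖x - y‖ ≤ M) (h2 : ‖x - y'‖ ≤ M) :
    cost p x y - cost p x y' ≤ M ^ (p - 1) * ‖y - y'‖ := by
  have hp0 : 0 < p := by linarith
  have key := abs_rpow_sub_rpow_le hp (norm_nonneg (x - y)) (norm_nonneg (x - y')) h1 h2
  have hn : |‖x - y‖ - ‖x - y'‖| ≤ ‖y - y'‖ := by
    have h3 := abs_norm_sub_norm_le (x - y) (x - y')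
    have hxy : (x - y) - (x - y') = y' - y := by abel
    rw [hxy] at h3
    calc |‖x - y‖ - ‖x - y'‖| ≤ ‖y' - y‖ := h3
    _ = ‖y - y'‖ := norm_sub_rev _ _
  have hfin : |‖x - y‖ ^ p - ‖x - y'‖ ^ p| ≤ p * M ^ (p - 1) * ‖y - y'‖ := by
    calc |‖x - y‖ ^ p - ‖x - y'‖ ^ p| ≤ p * M ^ (p-1) * |‖x - y‖ - ‖x - y'‖| := key
    _ ≤ p * M ^ (p - 1) * ‖y - y'‖ := by
        have hM : (0:ℝ) ≤ M := le_trans (norm_nonneg _) h1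
        have h4 : (0:ℝ) ≤ M ^ (p-1) := Real.rpow_nonneg hM _
        have : (0:ℝ) ≤ p * M ^ (p-1) := by positivity
        exact mul_le_mul_of_nonneg_left hn this
  rw [cost, cost, div_sub_div_same, div_le_iff₀ hp0]
  calc ‖x - y‖ ^ p - ‖x - y'‖ ^ p ≤ |‖x - y‖ ^ p - ‖x - y'‖ ^ p| := le_abs_self _
  _ ≤ p * M ^ (p - 1) * ‖y - y'‖ := hfin
  _ = M ^ (p - 1) * ‖y - y'‖ * p := by ring


variable {f : EuclideanSpace ℝ (Fin d) → ℝ}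


/-- c-transform -/
noncomputable def fc (p : ℝ) {d : ℕ} (f : EuclideanSpace ℝ (Fin d) → ℝ)
    (y : EuclideanSpace ℝ (Fin d)) : ℝ :=
  ⨅ x, (‖x - y‖ ^ p / p - f x)

variable {C : ℝ} {f : EuclideanSpace ℝ (Fin d) → ℝ}

lemma fc_bddBelow (hp : 1 < p) (hf : ∀ x, |f x| ≤ C) (y : EuclideanSpace ℝ (Fin d)) :
    BddBelow (Set.range fun x => ‖x - y‖ ^ p / p - f x) := by
  refine ⟨-C, ?_⟩
  rintro t ⟨x, rfl⟩
  have h1 : 0 ≤ ‖x - y‖ ^ p / p := div_nonneg (Real.rpow_nonneg (norm_nonneg _) _) (by linarith)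
  have h2 := (abs_le.1 (hf x)).2
  simp only [mem_setOf_eq]
  linarith

lemma fc_le (hp : 1 < p) (hf : ∀ x, |f x| ≤ C) (x y : EuclideanSpace ℝ (Fin d)) :
    fc p f y ≤ ‖x - y‖ ^ p / p - f x :=
  ciInf_le (fc_bddBelow hp hf y) x

lemma neg_C_le_fc (hp : 1 < p) (hf : ∀ x, |f x| ≤ C) (y : EuclideanSpace ℝ (Fin d)) :
    -C ≤ fc p f y := by
  refine le_ciInf fun x => ?_
  have h1 : 0 ≤ ‖x - y‖ ^ p / p := div_nonneg (Real.rpow_nonneg (norm_nonneg _) _) (by linarith)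
  have h2 := (abs_le.1 (hf x)).2
  linarith

lemma fc_le_neg (hp : 1 < p) (hf : ∀ x, |f x| ≤ C) (y : EuclideanSpace ℝ (Fin d)) :
    fc p f y ≤ -f y := by
  have := fc_le hp hf y y
  simpa [Real.zero_rpow (by linarith : p ≠ 0)] using this

lemma abs_fc_le (hp : 1 < p) (hf : ∀ x, |f x| ≤ C) (y : EuclideanSpace ℝ (Fin d)) :
    |fc p f y| ≤ C := by
  rw [abs_le]
  refine ⟨neg_C_le_fc hp hf y, ?_⟩
  have h1 := fc_le_neg hp hf y
  have h2 := (abs_le.1 (hf y)).1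
  linarith

lemma fc_feasible (hp : 1 < p) (hf : ∀ x, |f x| ≤ C) (x y : EuclideanSpace ℝ (Fin d)) :
    f x + fc p f y ≤ ‖x - y‖ ^ p / p := by
  have := fc_le hp hf x y
  linarith

lemma fc_antitone (hp : 1 < p) {g : EuclideanSpace ℝ (Fin d) → ℝ} {Cg : ℝ}
    (hg : ∀ x, |g x| ≤ Cg) (hfg : ∀ x, f x ≤ g x) (y : EuclideanSpace ℝ (Fin d)) :
    fc p g y ≤ fc p f y := by
  refine le_ciInf fun x => ?_
  have := fc_le hp hg x y
  have := hfg x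
  linarith

lemma le_fcc (hp : 1 < p) (hf : ∀ x, |f x| ≤ C) (x : EuclideanSpace ℝ (Fin d)) :
    f x ≤ fc p (fc p f) x := by
  refine le_ciInf fun y => ?_
  have := fc_feasible hp hf x y
  rw [norm_sub_rev]
  linarith

/-- any feasible partner is below the transform -/
lemma le_fc_of_feasible (hp : 1 < p) (hf : ∀ x, |f x| ≤ C)
    {g : EuclideanSpace ℝ (Fin d) → ℝ}
    (hfeas : ∀ x y, f x + g y ≤ ‖x - y‖ ^ p / p) (y : EuclideanSpace ℝ (Fin d)) :
    g y ≤ fc p f y := by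
  refine le_ciInf fun x => ?_
  have := hfeas x y
  linarith

lemma fc_triple (hp : 1 < p) (hf : ∀ x, |f x| ≤ C) :
    fc p (fc p (fc p f)) = fc p f := by
  funext y
  have hfc : ∀ x, |fc p f x| ≤ C := abs_fc_le hp hf
  have hfcc : ∀ x, |fc p (fc p f) x| ≤ C := abs_fc_le hp hfc
  refine le_antisymm (fc_antitone hp hfcc (le_fcc hp hf) y) (le_fcc hp hfc y)

lemma fc_zero (hp : 1 < p) : fc p (fun _ : EuclideanSpace ℝ (Fin d) => (0:ℝ)) = fun _ => (0:ℝ) := by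
  funext y
  have h0 : ∀ x : EuclideanSpace ℝ (Fin d), |(0:ℝ)| ≤ (0:ℝ) := by simp
  refine le_antisymm ?_ ?_
  · have := fc_le hp (C := 0) h0 y y
    simpa [Real.zero_rpow (by linarith : p ≠ 0)] using this
  · simpa using neg_C_le_fc hp (C := 0) h0 y

/-- the localization radius -/
noncomputable def rr (p C : ℝ) : ℝ := (p * (2 * C + 1)) ^ p⁻¹

lemma rr_nonneg (hp : 1 < p) (hC : 0 ≤ C) : 0 ≤ rr p C :=
  Real.rpow_nonneg (by nlinarith) _

lemma rr_rpow (hp : 1 < p) (hC : 0 ≤ C) : rr p C ^ p = p * (2 * C + 1) :=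
  Real.rpow_inv_rpow (by nlinarith) (by linarith)

lemma fc_sub_le (hp : 1 < p) (hC : 0 ≤ C) (hf : ∀ x, |f x| ≤ C)
    (y y' : EuclideanSpace ℝ (Fin d)) :
    fc p f y - fc p f y' ≤ (rr p C + ‖y - y'‖) ^ (p - 1) * ‖y - y'‖ := by
  have hp0 : (0:ℝ) < p := by linarith
  rw [sub_le_iff_le_add']
  refine le_of_forall_pos_le_add fun ε hε => ?_
  set ε' : ℝ := min ε 1 with hε'def
  have hε'pos : 0 < ε' := lt_min hε one_pos
  have h1 : fc p f y' < fc p f y' + ε' := by linarith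
  obtain ⟨x, hx⟩ := exists_lt_of_ciInf_lt (by exact h1)
  -- x is ε'-optimal for y'
  have hxloc : ‖x - y'‖ ≤ rr p C := by
    have hfc : fc p f y' ≤ C := (abs_le.1 (abs_fc_le hp hf y')).2
    have hfx : f x ≤ C := (abs_le.1 (hf x)).2
    have hb : ‖x - y'‖ ^ p / p ≤ 2 * C + 1 := by
      have : ε' ≤ 1 := min_le_right _ _
      nlinarith [hx]
    by_contra hcon
    push_neg at hcon
    have := Real.rpow_lt_rpow (rr_nonneg hp hC) hcon hp0
    rw [rr_rpow hp hC] at this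
    have : 2 * C + 1 < ‖x - y'‖ ^ p / p := by
      rw [lt_div_iff₀ hp0]; nlinarith
    linarith
  have hM1 : ‖x - y‖ ≤ rr p C + ‖y - y'‖ := by
    have hxy : x - y = (x - y') + (y' - y) := by abel
    calc ‖x - y‖ = ‖(x - y') + (y' - y)‖ := by rw [← hxy]
    _ ≤ ‖x - y'‖ + ‖y' - y‖ := norm_add_le _ _
    _ ≤ rr p C + ‖y - y'‖ := by rw [norm_sub_rev y' y]; exact add_le_add_left hxloc _
  have hM2 : ‖x - y'‖ ≤ rr p C + ‖y - y'‖ := le_trans hxloc (le_add_of_nonneg_right (norm_nonneg _))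
  have hcost : ‖x - y‖ ^ p / p - ‖x - y'‖ ^ p / p ≤ (rr p C + ‖y - y'‖) ^ (p - 1) * ‖y - y'‖ :=
    cost_sub_cost_le hp (y := y) (y' := y') hM1 hM2
  have hle : fc p f y ≤ ‖x - y‖ ^ p / p - f x := fc_le hp hf x y
  have hε'ε : ε' ≤ ε := min_le_left _ _
  linarith

lemma fc_dist_le (hp : 1 < p) (hC : 0 ≤ C) (hf : ∀ x, |f x| ≤ C)
    (y y' : EuclideanSpace ℝ (Fin d)) :
    dist (fc p f y) (fc p f y') ≤ (rr p C + dist y y') ^ (p - 1) * dist y y' := by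
  rw [Real.dist_eq, abs_sub_le_iff, dist_eq_norm]
  constructor
  · exact fc_sub_le hp hC hf y y'
  · have := fc_sub_le hp hC hf y' y
    rwa [norm_sub_rev] at this

lemma modulus_tendsto (hp : 1 < p) (hC : 0 ≤ C) :
    Filter.Tendsto (fun t : ℝ => (rr p C + t) ^ (p - 1) * t) (nhds (0:ℝ)) (nhds (0:ℝ)) := by
  have h : ContinuousAt (fun t : ℝ => (rr p C + t) ^ (p - 1) * t) 0 := by
    have h1 : ContinuousAt (fun t : ℝ => rr p C + t) 0 := continuousAt_const.add continuousAt_id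
    have h2 : ContinuousAt (fun s : ℝ => s ^ (p - 1)) (rr p C + 0) :=
      Real.continuousAt_rpow_const _ _ (Or.inr (by linarith))
    exact (h2.comp h1).mul continuousAt_id
  have := h.tendsto
  simpa using this

lemma fc_continuous (hp : 1 < p) (hC : 0 ≤ C) (hf : ∀ x, |f x| ≤ C) :
    Continuous (fc p f) := by
  have heq : Equicontinuous (fun _ : Unit => fc p f) := by
    refine Metric.equicontinuous_of_continuity_modulus
      (fun t => (rr p C + t) ^ (p - 1) * t) (modulus_tendsto hp hC) _ ?_
    intro x y i
    exact fc_dist_le hp hC hf x y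
  exact continuous_iff_continuousAt.2 fun x => (heq x).continuousAt ()

lemma fc_sub_const (hp : 1 < p) {g : EuclideanSpace ℝ (Fin d) → ℝ} {Cg : ℝ}
    (hg : ∀ x, |g x| ≤ Cg) (c : ℝ) :
    fc p (fun y => g y - c) = fun x => fc p g x + c := by
  have hg' : ∀ x, |g x - c| ≤ Cg + |c| := fun x => by
    calc |g x - c| ≤ |g x| + |c| := abs_sub _ _
    _ ≤ Cg + |c| := add_le_add_left (hg x) _
  funext x
  apply le_antisymm
  · have h : fc p (fun y => g y - c) x - c ≤ fc p g x := by
      refine le_ciInf fun y => ?_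
      have := fc_le hp hg' y x
      linarith
    linarith
  · refine le_ciInf fun y => ?_
    have := fc_le hp hg y x
    linarith

lemma volume_univ_euclidean (d : ℕ) :
    volume (univ : Set (EuclideanSpace ℝ (Fin d))) = (⊤ : ENNReal) ^ d := by
  have h := (EuclideanSpace.volume_preserving_symm_measurableEquiv_toLp (ι := Fin d)).measure_preimage
    (MeasurableSet.univ (α := Fin d → ℝ)).nullMeasurableSet
  rw [preimage_univ] at h
  rw [h, volume_pi, Measure.pi_univ]
  simp [Real.volume_univ, Finset.prod_const]

end KantorovichAux

open KantorovichAux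
open Filter in
set_option maxHeartbeats 2000000 in
/-- Existence of a maximizing pair of dual potentials for the
Kantorovich dual problem with cost `c(x-y) = |x-y|^p / p`, which moreover can be
chosen to be dual `c`-conjugates of each other. -/
theorem kantorovich_dual_maximizer_exists
    (d : ℕ) (p : ℝ) (hp : 1 < p)
    (ρ₀ ρ₁ : EuclideanSpace ℝ (Fin d) → ℝ)
    (hρ₀_int : Integrable ρ₀) (hρ₁_int : Integrable ρ₁)
    (hρ₀_nonneg : ∀ x, 0 ≤ ρ₀ x) (hρ₁_nonneg : ∀ x, 0 ≤ ρ₁ x)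
    (hρ₀_supp : HasCompactSupport ρ₀) (hρ₁_supp : HasCompactSupport ρ₁)
    (hρ₀_mass : ∫ x, ρ₀ x = 1) (hρ₁_mass : ∫ x, ρ₁ x = 1) :
    ∃ ubar vbar : EuclideanSpace ℝ (Fin d) → ℝ,
      -- `ubar, vbar` are bounded continuous
      Continuous ubar ∧ Continuous vbar ∧
      (∃ M : ℝ, ∀ x, |ubar x| ≤ M) ∧ (∃ M : ℝ, ∀ x, |vbar x| ≤ M) ∧
      -- feasibility for the dual problem
      (∀ x y, ubar x + vbar y ≤ ‖x - y‖ ^ p / p) ∧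
      -- optimality among all bounded continuous feasible pairs
      (∀ u v : EuclideanSpace ℝ (Fin d) → ℝ,
        Continuous u → Continuous v →
        (∃ M : ℝ, ∀ x, |u x| ≤ M) → (∃ M : ℝ, ∀ x, |v x| ≤ M) →
        (∀ x y, u x + v y ≤ ‖x - y‖ ^ p / p) →
        ∫ x, u x * ρ₀ x + ∫ y, v y * ρ₁ y
          ≤ ∫ x, ubar x * ρ₀ x + ∫ y, vbar y * ρ₁ y) ∧
      -- the pair consists of dual c-conjugate functions
      (∀ x, ubar x = ⨅ y : EuclideanSpace ℝ (Fin d), (‖x - y‖ ^ p / p - vbar y)) ∧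
      (∀ y, vbar y = ⨅ x : EuclideanSpace ℝ (Fin d), (‖x - y‖ ^ p / p - ubar x)) := by
  classical
  have hp0 : (0:ℝ) < p := lt_trans one_pos hp
  -- a common compact ball containing both supports
  obtain ⟨R, hR0, hsupp0, hsupp1⟩ : ∃ R : ℝ, 0 ≤ R ∧
      tsupport ρ₀ ⊆ Metric.closedBall (0 : EuclideanSpace ℝ (Fin d)) R ∧
      tsupport ρ₁ ⊆ Metric.closedBall (0 : EuclideanSpace ℝ (Fin d)) R := by
    obtain ⟨R₀, hR₀0, hR₀⟩ := hρ₀_supp.isBounded.subset_closedBall_lt 0 0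
    obtain ⟨R₁, hR₁0, hR₁⟩ := hρ₁_supp.isBounded.subset_closedBall_lt 0 0
    exact ⟨max R₀ R₁, le_max_of_le_left hR₀0.le,
      hR₀.trans (Metric.closedBall_subset_closedBall (le_max_left _ _)),
      hR₁.trans (Metric.closedBall_subset_closedBall (le_max_right _ _))⟩
  set T : ℝ := (2*R) ^ p / p with hTdef
  have hT0 : 0 ≤ T := div_nonneg (Real.rpow_nonneg (by linarith) _) hp0.le
  set C : ℝ := T + 1 with hCdef
  have hC0 : (0:ℝ) ≤ C := by linarith
  set r : ℝ := rr p C with hrdef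
  have hr0 : 0 ≤ r := rr_nonneg hp hC0
  set R' : ℝ := R + r + 1 with hR'def
  have hRR' : R ≤ R' := by linarith
  -- points where the densities do not vanish
  have hx0 : ∀ x, ρ₀ x ≠ 0 → x ∈ Metric.closedBall (0 : EuclideanSpace ℝ (Fin d)) R :=
    fun x hx => hsupp0 (subset_tsupport ρ₀ hx)
  have hx1 : ∀ x, ρ₁ x ≠ 0 → x ∈ Metric.closedBall (0 : EuclideanSpace ℝ (Fin d)) R :=
    fun x hx => hsupp1 (subset_tsupport ρ₁ hx)
  -- integrability helper
  have hint : ∀ (f ρ : EuclideanSpace ℝ (Fin d) → ℝ), Continuous f → Integrable ρ →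
      ∀ M : ℝ, (∀ x, |f x| ≤ M) → Integrable (fun x => f x * ρ x) := by
    intro f ρ hf hρ M hM
    exact hρ.bdd_mul hf.aestronglyMeasurable (ae_of_all _ fun x => by simpa [Real.norm_eq_abs] using hM x)
  -- monotonicity helper
  have key_mono : ∀ (ρ f g : EuclideanSpace ℝ (Fin d) → ℝ) (Mf Mg : ℝ), Integrable ρ →
      (∀ x, 0 ≤ ρ x) → Continuous f → Continuous g → (∀ x, |f x| ≤ Mf) → (∀ x, |g x| ≤ Mg) →
      (∀ x, ρ x ≠ 0 → f x ≤ g x) → (∫ x, f x * ρ x) ≤ ∫ x, g x * ρ x := by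
    intro ρ f g Mf Mg hρ hρ0 hf hg hMf hMg hfg
    refine integral_mono (hint f ρ hf hρ Mf hMf) (hint g ρ hg hρ Mg hMg) fun x => ?_
    by_cases hx : ρ x = 0
    · simp [hx]
    · exact mul_le_mul_of_nonneg_right (hfg x hx) (hρ0 x)
  -- shift helper
  have key_shift : ∀ (ρ f : EuclideanSpace ℝ (Fin d) → ℝ) (Mf a : ℝ), Integrable ρ →
      (∫ x, ρ x) = 1 → Continuous f → (∀ x, |f x| ≤ Mf) →
      (∫ x, (f x + a) * ρ x) = (∫ x, f x * ρ x) + a := by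
    intro ρ f Mf a hρ hmass hf hMf
    have he : (fun x => (f x + a) * ρ x) = fun x => f x * ρ x + a * ρ x := by
      funext x; ring
    rw [he, integral_add (hint f ρ hf hρ Mf hMf) (hρ.const_mul a), integral_const_mul, hmass,
      mul_one]
  -- cost bound on the support ball
  have hcostK : ∀ x y : EuclideanSpace ℝ (Fin d),
      x ∈ Metric.closedBall (0 : EuclideanSpace ℝ (Fin d)) R →
      y ∈ Metric.closedBall (0 : EuclideanSpace ℝ (Fin d)) R → ‖x - y‖ ^ p / p ≤ T := by
    intro x y hx hy
    have hx' : ‖x‖ ≤ R := mem_closedBall_zero_iff.1 hx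
    have hy' : ‖y‖ ≤ R := mem_closedBall_zero_iff.1 hy
    have hxy : ‖x - y‖ ≤ 2 * R := by
      calc ‖x - y‖ ≤ ‖x‖ + ‖y‖ := norm_sub_le _ _
      _ ≤ 2 * R := by linarith
    rw [hTdef]
    gcongr
  -- the admissible class and its value set
  set 𝒮 : Set ℝ := {t | ∃ U : EuclideanSpace ℝ (Fin d) → ℝ, (∀ x, |U x| ≤ C) ∧
      fc p (fc p U) = U ∧
      t = (∫ x, U x * ρ₀ x) + ∫ y, fc p U y * ρ₁ y} with h𝒮def
  have h0mem : (0:ℝ) ∈ 𝒮 := by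
    rw [h𝒮def]
    refine ⟨fun _ => 0, fun x => by simpa using hC0, ?_, ?_⟩
    · rw [fc_zero hp, fc_zero hp]
    · rw [fc_zero hp]; simp
  have hSb : BddAbove 𝒮 := by
    refine ⟨2*C, ?_⟩
    rintro t ⟨Uu, hU, hUcc, rfl⟩
    have hfcUb : ∀ x, |fc p Uu x| ≤ C := abs_fc_le hp hU
    have hUcont : Continuous Uu := by
      rw [← hUcc]; exact fc_continuous hp hC0 hfcUb
    have h1 : (∫ x, Uu x * ρ₀ x) ≤ C := by
      have hm : (∫ x, Uu x * ρ₀ x) ≤ ∫ x, C * ρ₀ x :=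
        integral_mono (hint Uu ρ₀ hUcont hρ₀_int C hU) (hρ₀_int.const_mul C)
          (fun x => mul_le_mul_of_nonneg_right ((abs_le.1 (hU x)).2) (hρ₀_nonneg x))
      have he : (∫ x, C * ρ₀ x) = C := by rw [integral_const_mul, hρ₀_mass, mul_one]
      linarith
    have h2 : (∫ y, fc p Uu y * ρ₁ y) ≤ C := by
      have hm : (∫ y, fc p Uu y * ρ₁ y) ≤ ∫ y, C * ρ₁ y :=
        integral_mono (hint _ ρ₁ (fc_continuous hp hC0 hU) hρ₁_int C hfcUb) (hρ₁_int.const_mul C)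
          (fun y => mul_le_mul_of_nonneg_right ((abs_le.1 (hfcUb y)).2) (hρ₁_nonneg y))
      have he : (∫ y, C * ρ₁ y) = C := by rw [integral_const_mul, hρ₁_mass, mul_one]
      linarith
    linarith
  have hS0 : (0:ℝ) ≤ sSup 𝒮 := le_csSup hSb h0mem
  -- KEY 1 : every bounded continuous feasible pair has value at most `sSup 𝒮`
  have key1 : ∀ (u v : EuclideanSpace ℝ (Fin d) → ℝ) (Mu Mv : ℝ), Continuous u → Continuous v →
      (∀ x, |u x| ≤ Mu) → (∀ x, |v x| ≤ Mv) →
      (∀ x y, u x + v y ≤ ‖x - y‖ ^ p / p) →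
      (∫ x, u x * ρ₀ x) + (∫ y, v y * ρ₁ y) ≤ sSup 𝒮 := by
    intro u v Mu Mv hu hv hMu hMv hfeas
    obtain ⟨xs, hxs, hxsmax⟩ := (isCompact_closedBall (0 : EuclideanSpace ℝ (Fin d)) R).exists_isMaxOn
      ⟨0, Metric.mem_closedBall_self hR0⟩ hu.continuousOn
    set a : ℝ := u xs with hadef
    set u' : EuclideanSpace ℝ (Fin d) → ℝ := fun x => max (-C) (min C (u x - a)) with hu'def
    set v' : EuclideanSpace ℝ (Fin d) → ℝ := fun y => max (-C) (min C (v y + a)) with hv'def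
    have hu'b : ∀ x, |u' x| ≤ C := fun x =>
      abs_le.2 ⟨le_max_left _ _, max_le (by linarith) (min_le_left _ _)⟩
    have hv'b : ∀ y, |v' y| ≤ C := fun y =>
      abs_le.2 ⟨le_max_left _ _, max_le (by linarith) (min_le_left _ _)⟩
    have hu'cont : Continuous u' := continuous_const.max (continuous_const.min
      (hu.sub continuous_const))
    have hv'cont : Continuous v' := continuous_const.max (continuous_const.min
      (hv.add continuous_const))
    have hfeas' : ∀ x y, u' x + v' y ≤ ‖x - y‖ ^ p / p := by
      intro x y
      have hcnn : 0 ≤ ‖x - y‖ ^ p / p := div_nonneg (Real.rpow_nonneg (norm_nonneg _) _) hp0.le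
      rcases le_total (u x - a) (-C) with h | h
      · have he : u' x = -C := by
          rw [hu'def]; simp only
          rw [min_eq_right (by linarith), max_eq_left (by linarith)]
        have h2 : v' y ≤ C := (abs_le.1 (hv'b y)).2
        rw [he]; linarith
      · rcases le_total (v y + a) (-C) with h2 | h2
        · have he : v' y = -C := by
            rw [hv'def]; simp only
            rw [min_eq_right (by linarith), max_eq_left (by linarith)]
          have h3 : u' x ≤ C := (abs_le.1 (hu'b x)).2
          rw [he]; linarith
        · have e1 : u' x ≤ u x - a := by
            rw [hu'def]; simp only
            exact max_le (by linarith) (min_le_right _ _)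
          have e2 : v' y ≤ v y + a := by
            rw [hv'def]; simp only
            exact max_le (by linarith) (min_le_right _ _)
          have := hfeas x y; linarith
    have hshift0 : (∫ x, (u x - a) * ρ₀ x) = (∫ x, u x * ρ₀ x) - a := by
      have := key_shift ρ₀ u Mu (-a) hρ₀_int hρ₀_mass hu hMu
      simpa [sub_eq_add_neg] using this
    have hshift1 : (∫ y, (v y + a) * ρ₁ y) = (∫ y, v y * ρ₁ y) + a :=
      key_shift ρ₁ v Mv a hρ₁_int hρ₁_mass hv hMv
    have hm0 : (∫ x, (u x - a) * ρ₀ x) ≤ ∫ x, u' x * ρ₀ x := by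
      refine key_mono ρ₀ _ u' (Mu + |a|) C hρ₀_int hρ₀_nonneg (hu.sub continuous_const) hu'cont
        (fun x => by have h1 := hMu x; have h2 := abs_sub (u x) a; linarith) hu'b ?_
      intro x hρx
      have hle : u x - a ≤ 0 := by
        have := hxsmax (hx0 x hρx); rw [hadef]; simpa [sub_nonpos] using this
      rw [hu'def]; simp only
      rw [min_eq_right (by linarith)]
      exact le_max_right _ _
    have hm1 : (∫ y, (v y + a) * ρ₁ y) ≤ ∫ y, v' y * ρ₁ y := by
      refine key_mono ρ₁ _ v' (Mv + |a|) C hρ₁_int hρ₁_nonneg (hv.add continuous_const) hv'cont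
        (fun y => by have h1 := hMv y; have h2 := abs_add_le (v y) a; linarith) hv'b ?_
      intro y hρy
      have hva : v y + a ≤ T := by
        have h1 := hfeas xs y
        have h2 := hcostK xs y hxs (hx1 y hρy)
        rw [hadef]; linarith
      rw [hv'def]; simp only
      rw [min_eq_right (by linarith)]
      exact le_max_right _ _
    have hV'b : ∀ y, |fc p u' y| ≤ C := abs_fc_le hp hu'b
    have hU'b : ∀ x, |fc p (fc p u') x| ≤ C := abs_fc_le hp hV'b
    have hm2 : (∫ x, u' x * ρ₀ x) ≤ ∫ x, fc p (fc p u') x * ρ₀ x :=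
      key_mono ρ₀ u' _ C C hρ₀_int hρ₀_nonneg hu'cont (fc_continuous hp hC0 hV'b) hu'b hU'b
        (fun x _ => le_fcc hp hu'b x)
    have hm3 : (∫ y, v' y * ρ₁ y) ≤ ∫ y, fc p u' y * ρ₁ y :=
      key_mono ρ₁ v' _ C C hρ₁_int hρ₁_nonneg hv'cont (fc_continuous hp hC0 hu'b) hv'b hV'b
        (fun y _ => le_fc_of_feasible hp hu'b hfeas' y)
    have h4 : fc p (fc p (fc p u')) = fc p u' := fc_triple hp hu'b
    have hmem : ((∫ x, fc p (fc p u') x * ρ₀ x) + ∫ y, fc p (fc p (fc p u')) y * ρ₁ y) ∈ 𝒮 := by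
      rw [h𝒮def]
      exact ⟨fc p (fc p u'), hU'b, fc_triple hp hV'b, rfl⟩
    have hfin : (∫ x, fc p (fc p u') x * ρ₀ x) + (∫ y, fc p u' y * ρ₁ y) ≤ sSup 𝒮 := by
      have := le_csSup hSb hmem
      rwa [h4] at this
    calc (∫ x, u x * ρ₀ x) + (∫ y, v y * ρ₁ y)
        = (∫ x, (u x - a) * ρ₀ x) + (∫ y, (v y + a) * ρ₁ y) := by rw [hshift0, hshift1]; ring
      _ ≤ (∫ x, u' x * ρ₀ x) + (∫ y, v' y * ρ₁ y) := add_le_add hm0 hm1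
      _ ≤ (∫ x, fc p (fc p u') x * ρ₀ x) + (∫ y, fc p u' y * ρ₁ y) := add_le_add hm2 hm3
      _ ≤ sSup 𝒮 := hfin
  -- KEY 2 : attainment
  have key2 : ∃ u₂ v₂ : EuclideanSpace ℝ (Fin d) → ℝ,
      Continuous u₂ ∧ Continuous v₂ ∧ (∀ x, |u₂ x| ≤ C) ∧ (∀ y, |v₂ y| ≤ C) ∧
      (∀ x y, u₂ x + v₂ y ≤ ‖x - y‖ ^ p / p) ∧ fc p u₂ = v₂ ∧ fc p v₂ = u₂ ∧
      sSup 𝒮 ≤ (∫ x, u₂ x * ρ₀ x) + ∫ y, v₂ y * ρ₁ y := by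
    have hsel : ∀ n : ℕ, ∃ U : EuclideanSpace ℝ (Fin d) → ℝ, (∀ x, |U x| ≤ C) ∧
        fc p (fc p U) = U ∧
        sSup 𝒮 - 1/(n+1) < (∫ x, U x * ρ₀ x) + ∫ y, fc p U y * ρ₁ y := by
      intro n
      have hlt : sSup 𝒮 - 1/(n+1) < sSup 𝒮 := by
        have hpos : (0:ℝ) < 1/(n+1) := by positivity
        linarith
      obtain ⟨t, ht, hlt'⟩ := exists_lt_of_lt_csSup ⟨0, h0mem⟩ hlt
      rw [h𝒮def] at ht
      obtain ⟨U, hUb, hUcc, rfl⟩ := ht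
      exact ⟨U, hUb, hUcc, hlt'⟩
    choose U hUb hUcc hUgt using hsel
    have hfcUb : ∀ n, ∀ x, |fc p (U n) x| ≤ C := fun n => abs_fc_le hp (hUb n)
    have hUdist : ∀ n x y, dist (U n x) (U n y) ≤ (r + dist x y) ^ (p-1) * dist x y := by
      intro n x y
      conv_lhs => rw [← hUcc n]
      exact fc_dist_le hp hC0 (hfcUb n) x y
    have hUcont : ∀ n, Continuous (U n) := by
      intro n; rw [← hUcc n]; exact fc_continuous hp hC0 (hfcUb n)
    haveI : CompactSpace (Metric.closedBall (0 : EuclideanSpace ℝ (Fin d)) R') :=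
      isCompact_iff_compactSpace.mp (isCompact_closedBall _ _)
    set F : ℕ → BoundedContinuousFunction (Metric.closedBall (0 : EuclideanSpace ℝ (Fin d)) R') ℝ :=
      fun n => BoundedContinuousFunction.mkOfBound
        ⟨fun x => U n x.1, (hUcont n).comp continuous_subtype_val⟩ (2*C)
        (fun x y => by
          have h1 := abs_le.1 (hUb n x.1)
          have h2 := abs_le.1 (hUb n y.1)
          rw [Real.dist_eq]
          have h3 : |U n x.1 - U n y.1| ≤ |U n x.1| + |U n y.1| := abs_sub _ _
          have h4 := hUb n x.1
          have h5 := hUb n y.1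
          show |U n x.1 - U n y.1| ≤ 2*C
          linarith) with hFdef
    have hFval : ∀ (n : ℕ) (x : Metric.closedBall (0 : EuclideanSpace ℝ (Fin d)) R'),
        F n x = U n x.1 := fun n x => rfl
    have hAcomp : IsCompact (closure (Set.range F)) := by
      refine BoundedContinuousFunction.arzela_ascoli (Icc (-C) C) isCompact_Icc (Set.range F)
        ?_ ?_
      · rintro f x ⟨n, rfl⟩
        exact mem_Icc.2 (abs_le.1 (hUb n x.1))
      · refine Metric.equicontinuous_of_continuity_modulus (fun t => (r + t)^(p-1) * t)
          (modulus_tendsto hp hC0) _ ?_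
        rintro x y ⟨f, hf⟩
        obtain ⟨n, rfl⟩ := hf
        show dist (F n x) (F n y) ≤ _
        rw [hFval, hFval, Subtype.dist_eq]
        exact hUdist n x.1 y.1
    obtain ⟨fbar, hfbarA, φ, hφ, hφtend⟩ :=
      hAcomp.isSeqCompact (x := F) (fun n => subset_closure (Set.mem_range_self n))
    set εs : ℕ → ℝ := fun n => dist (F (φ n)) fbar with hεdef
    have hεtend : Tendsto εs atTop (nhds 0) := tendsto_iff_dist_tendsto_zero.1 hφtend
    have hεnn : ∀ n, 0 ≤ εs n := fun n => dist_nonneg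
    have hptw : ∀ (n : ℕ) (x : Metric.closedBall (0 : EuclideanSpace ℝ (Fin d)) R'),
        |U (φ n) x.1 - fbar x| ≤ εs n := by
      intro n x
      have h := BoundedContinuousFunction.dist_coe_le_dist (f := F (φ n)) (g := fbar) x
      rw [Real.dist_eq] at h
      exact h
    have hfbarb : ∀ x, |fbar x| ≤ C := by
      intro x
      have hb : ∀ n, |fbar x| ≤ εs n + C := by
        intro n
        have h1 := hptw n x
        have h2 := hUb (φ n) x.1
        have h3 : |fbar x| ≤ |fbar x - U (φ n) x.1| + |U (φ n) x.1| := by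
          have := abs_add_le (fbar x - U (φ n) x.1) (U (φ n) x.1)
          simpa using this
        rw [abs_sub_comm] at h3
        linarith
      have hlim : Tendsto (fun n => εs n + C) atTop (nhds C) := by
        have := hεtend.add (tendsto_const_nhds (x := C))
        simpa using this
      exact ge_of_tendsto' hlim hb
    set Kb : ℝ := (r + 2*R')^(p-1) with hKbdef
    have hR'0 : (0:ℝ) ≤ R' := by
      rw [hR'def]; linarith
    have hKb0 : 0 ≤ Kb := Real.rpow_nonneg (by linarith) _
    have hfbarlip : ∀ x y : Metric.closedBall (0 : EuclideanSpace ℝ (Fin d)) R',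
        dist (fbar x) (fbar y) ≤ Kb * dist x y := by
      intro x y
      have hxy : dist x y ≤ 2*R' := by
        rw [Subtype.dist_eq]
        have hx := Metric.mem_closedBall.1 x.2
        have hy := Metric.mem_closedBall.1 y.2
        calc dist x.1 y.1 ≤ dist x.1 0 + dist (0 : EuclideanSpace ℝ (Fin d)) y.1 :=
              dist_triangle _ _ _
        _ ≤ R' + R' := add_le_add hx (by rw [dist_comm]; exact hy)
        _ = 2*R' := by ring
      have hb : ∀ n, dist (fbar x) (fbar y) ≤ 2*(εs n) + Kb * dist x y := by
        intro n
        have h1 := hptw n x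
        have h2 := hptw n y
        have h3 : dist (U (φ n) x.1) (U (φ n) y.1) ≤ Kb * dist x y := by
          have h4 := hUdist (φ n) x.1 y.1
          rw [← Subtype.dist_eq] at h4
          refine h4.trans ?_
          have hmon : (r + dist x y)^(p-1) ≤ Kb := by
            rw [hKbdef]
            exact Real.rpow_le_rpow (by positivity) (by linarith) (by linarith)
          exact mul_le_mul_of_nonneg_right hmon dist_nonneg
        have e1 : dist (fbar x) (U (φ n) x.1) ≤ εs n := by
          rw [Real.dist_eq, abs_sub_comm]; exact h1
        have e2 : dist (U (φ n) y.1) (fbar y) ≤ εs n := by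
          rw [Real.dist_eq]; exact h2
        calc dist (fbar x) (fbar y)
            ≤ dist (fbar x) (U (φ n) x.1) + dist (U (φ n) x.1) (U (φ n) y.1)
              + dist (U (φ n) y.1) (fbar y) := dist_triangle4 _ _ _ _
        _ ≤ εs n + Kb * dist x y + εs n := by linarith
        _ = 2*εs n + Kb * dist x y := by ring
      have hlim : Tendsto (fun n => 2*εs n + Kb * dist x y) atTop (nhds (Kb * dist x y)) := by
        have h5 : Tendsto (fun n => 2*εs n) atTop (nhds 0) := by
          have := hεtend.const_mul 2
          simpa using this
        have := h5.add (tendsto_const_nhds (x := Kb * dist x y))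
        simpa using this
      exact ge_of_tendsto' hlim hb
    -- extend `fbar` to the whole space
    set f₀ : EuclideanSpace ℝ (Fin d) → ℝ := fun x =>
      if h : x ∈ Metric.closedBall (0 : EuclideanSpace ℝ (Fin d)) R' then fbar ⟨x, h⟩ else 0
      with hf₀def
    have hlipon : LipschitzOnWith (Real.toNNReal Kb) f₀
        (Metric.closedBall (0 : EuclideanSpace ℝ (Fin d)) R') := by
      rw [lipschitzOnWith_iff_dist_le_mul]
      intro x hx y hy
      have hfx : f₀ x = fbar ⟨x, hx⟩ := by rw [hf₀def]; simp only [dif_pos hx]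
      have hfy : f₀ y = fbar ⟨y, hy⟩ := by rw [hf₀def]; simp only [dif_pos hy]
      rw [hfx, hfy, Real.coe_toNNReal _ hKb0]
      have := hfbarlip ⟨x, hx⟩ ⟨y, hy⟩
      rwa [Subtype.dist_eq] at this
    obtain ⟨g, hglip, hgeq⟩ := hlipon.extend_real
    set Ubar : EuclideanSpace ℝ (Fin d) → ℝ := fun x => max (-C) (min C (g x)) with hUbardef
    have hUbarcont : Continuous Ubar :=
      continuous_const.max (continuous_const.min hglip.continuous)
    have hUbarb : ∀ x, |Ubar x| ≤ C := fun x =>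
      abs_le.2 ⟨le_max_left _ _, max_le (by linarith) (min_le_left _ _)⟩
    have hUbarB : ∀ (x : EuclideanSpace ℝ (Fin d))
        (hx : x ∈ Metric.closedBall (0 : EuclideanSpace ℝ (Fin d)) R'),
        Ubar x = fbar ⟨x, hx⟩ := by
      intro x hx
      have h1 : g x = fbar ⟨x, hx⟩ := by
        have h2 := hgeq hx
        rw [← h2, hf₀def]
        simp only [dif_pos hx]
      rw [hUbardef]
      simp only
      rw [h1, min_eq_right (abs_le.1 (hfbarb _)).2, max_eq_right (abs_le.1 (hfbarb _)).1]
    -- the limiting conjugate pair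
    have hv₂b : ∀ x, |fc p Ubar x| ≤ C := abs_fc_le hp hUbarb
    have hu₂b : ∀ x, |fc p (fc p Ubar) x| ≤ C := abs_fc_le hp hv₂b
    have hu₂cont : Continuous (fc p (fc p Ubar)) := fc_continuous hp hC0 hv₂b
    have hv₂cont : Continuous (fc p Ubar) := fc_continuous hp hC0 hUbarb
    have hfeas₂ : ∀ x y, fc p (fc p Ubar) x + fc p Ubar y ≤ ‖x - y‖ ^ p / p := by
      intro x y
      have h := fc_feasible hp hv₂b y x
      rw [norm_sub_rev] at h
      linarith
    have hK₀sub : Metric.closedBall (0 : EuclideanSpace ℝ (Fin d)) R ⊆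
        Metric.closedBall (0 : EuclideanSpace ℝ (Fin d)) R' :=
      Metric.closedBall_subset_closedBall hRR'
    -- the value estimates
    have hJn : ∀ n, sSup 𝒮 - 1/((φ n : ℝ)+1) - 2*εs n ≤
        (∫ x, fc p (fc p Ubar) x * ρ₀ x) + ∫ y, fc p Ubar y * ρ₁ y := by
      intro n
      -- (i)
      have hi : (∫ x, U (φ n) x * ρ₀ x) - εs n ≤ ∫ x, Ubar x * ρ₀ x := by
        have hs : (∫ x, (U (φ n) x + -(εs n)) * ρ₀ x) = (∫ x, U (φ n) x * ρ₀ x) + -(εs n) :=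
          key_shift ρ₀ (U (φ n)) C (-(εs n)) hρ₀_int hρ₀_mass (hUcont _) (hUb _)
        have hm : (∫ x, (U (φ n) x + -(εs n)) * ρ₀ x) ≤ ∫ x, Ubar x * ρ₀ x := by
          refine key_mono ρ₀ _ Ubar (C + εs n) C hρ₀_int hρ₀_nonneg
            ((hUcont _).add continuous_const) hUbarcont
            (fun x => by
              have h1 := abs_add_le (U (φ n) x) (-(εs n))
              have h2 := hUb (φ n) x
              have h3 := hεnn n
              rw [abs_neg, abs_of_nonneg h3] at h1
              linarith) hUbarb ?_
          intro x hρx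
          have hx' : x ∈ Metric.closedBall (0 : EuclideanSpace ℝ (Fin d)) R' :=
            hK₀sub (hx0 x hρx)
          have h1 := hptw n ⟨x, hx'⟩
          have h2 := hUbarB x hx'
          have h3 : U (φ n) x - fbar ⟨x, hx'⟩ ≤ εs n := by
            simpa using (abs_le.1 h1).2
          rw [h2]
          linarith
        linarith
      -- (ii)
      have hii : (∫ y, fc p (U (φ n)) y * ρ₁ y) - εs n ≤ ∫ y, fc p Ubar y * ρ₁ y := by
        have hs : (∫ y, (fc p (U (φ n)) y + -(εs n)) * ρ₁ y)
            = (∫ y, fc p (U (φ n)) y * ρ₁ y) + -(εs n) :=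
          key_shift ρ₁ _ C (-(εs n)) hρ₁_int hρ₁_mass (fc_continuous hp hC0 (hUb _)) (hfcUb _)
        have hm : (∫ y, (fc p (U (φ n)) y + -(εs n)) * ρ₁ y) ≤ ∫ y, fc p Ubar y * ρ₁ y := by
          refine key_mono ρ₁ _ _ (C + εs n) C hρ₁_int hρ₁_nonneg
            ((fc_continuous hp hC0 (hUb _)).add continuous_const) hv₂cont
            (fun y => by
              have h1 := abs_add_le (fc p (U (φ n)) y) (-(εs n))
              have h2 := hfcUb (φ n) y
              have h3 := hεnn n
              rw [abs_neg, abs_of_nonneg h3] at h1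
              linarith) hv₂b ?_
          intro y hρy
          have hy' : y ∈ Metric.closedBall (0 : EuclideanSpace ℝ (Fin d)) R := hx1 y hρy
          -- show `fc (U (φ n)) y - εs n ≤ fc Ubar y`
          have hgoal : fc p (U (φ n)) y - εs n ≤ fc p Ubar y := by
            refine le_ciInf fun x => ?_
            by_cases hxB : x ∈ Metric.closedBall (0 : EuclideanSpace ℝ (Fin d)) R'
            · have h1 := hptw n ⟨x, hxB⟩
              have h2 := hUbarB x hxB
              have h3 : -(εs n) ≤ U (φ n) x - fbar ⟨x, hxB⟩ := by
                simpa using (abs_le.1 h1).1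
              have h4 : fc p (U (φ n)) y ≤ ‖x - y‖ ^ p / p - U (φ n) x :=
                fc_le hp (hUb _) x y
              rw [h2]
              linarith
            · have hxn : R' < ‖x‖ := by
                by_contra hcon
                push_neg at hcon
                exact hxB (mem_closedBall_zero_iff.2 hcon)
              have hyn : ‖y‖ ≤ R := mem_closedBall_zero_iff.1 hy'
              have hdist : r ≤ ‖x - y‖ := by
                have h5 : ‖x‖ - ‖y‖ ≤ ‖x - y‖ := norm_sub_norm_le _ _
                rw [hR'def] at hxn
                linarith
              have hcost : 2*C + 1 ≤ ‖x - y‖ ^ p / p := by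
                have h6 : r ^ p ≤ ‖x - y‖ ^ p := Real.rpow_le_rpow hr0 hdist hp0.le
                rw [hrdef, rr_rpow hp hC0] at h6
                rw [le_div_iff₀ hp0]
                nlinarith
              have h7 := (abs_le.1 (hUbarb x)).2
              have h8 := (abs_le.1 (abs_fc_le hp (hUb (φ n)) y)).2
              have h9 := hεnn n
              linarith
          linarith
        linarith
      -- (iii)
      have hiii : (∫ x, Ubar x * ρ₀ x) ≤ ∫ x, fc p (fc p Ubar) x * ρ₀ x :=
        key_mono ρ₀ Ubar _ C C hρ₀_int hρ₀_nonneg hUbarcont hu₂cont hUbarb hu₂b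
          (fun x _ => le_fcc hp hUbarb x)
      have hval := hUgt (φ n)
      linarith
    have hlim : Tendsto (fun n => sSup 𝒮 - 1/((φ n : ℝ)+1) - 2*εs n) atTop (nhds (sSup 𝒮)) := by
      have h1 : Tendsto (fun n => 1/((φ n : ℝ)+1)) atTop (nhds 0) :=
        tendsto_one_div_add_atTop_nhds_zero_nat.comp hφ.tendsto_atTop
      have h2 : Tendsto (fun n => 2*εs n) atTop (nhds 0) := by
        have := hεtend.const_mul 2
        simpa using this
      have h3 := ((tendsto_const_nhds (x := sSup 𝒮)).sub h1).sub h2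
      simpa using h3
    have hfin : sSup 𝒮 ≤ (∫ x, fc p (fc p Ubar) x * ρ₀ x) + ∫ y, fc p Ubar y * ρ₁ y :=
      le_of_tendsto' hlim hJn
    exact ⟨fc p (fc p Ubar), fc p Ubar, hu₂cont, hv₂cont, hu₂b, hv₂b, hfeas₂,
      fc_triple hp hUbarb, rfl, hfin⟩

  obtain ⟨u₂, v₂, hu₂c, hv₂c, hu₂b, hv₂b, hfeas₂, hconjA, hconjB, hS₂⟩ := key2
  set cs : ℝ := ∫ y, v₂ y * ρ₁ y with hcsdef
  have hubarb : ∀ x, |u₂ x + cs| ≤ C + |cs| := fun x => by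
    have := abs_add_le (u₂ x) cs; have := hu₂b x; linarith
  have hvbarb : ∀ y, |v₂ y - cs| ≤ C + |cs| := fun y => by
    have := abs_sub (v₂ y) cs; have := hv₂b y; linarith
  have hrhs0 : (∫ y, (v₂ y - cs) * ρ₁ y) = 0 := by
    have h := key_shift ρ₁ v₂ C (-cs) hρ₁_int hρ₁_mass hv₂c hv₂b
    simp only [← sub_eq_add_neg] at h
    rw [h, ← hcsdef, sub_self]
  have hrhs1 : (∫ x, (u₂ x + cs) * ρ₀ x) = (∫ x, u₂ x * ρ₀ x) + cs :=
    key_shift ρ₀ u₂ C cs hρ₀_int hρ₀_mass hu₂c hu₂b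
  refine ⟨fun x => u₂ x + cs, fun y => v₂ y - cs,
    hu₂c.add continuous_const, hv₂c.sub continuous_const,
    ⟨C + |cs|, hubarb⟩, ⟨C + |cs|, hvbarb⟩, ?_, ?_, ?_, ?_⟩
  · intro x y
    have := hfeas₂ x y; linarith
  · -- optimality
    intro u v hu hv hMu' hMv' hfeas
    obtain ⟨Mu, hMu⟩ := hMu'
    obtain ⟨Mv, hMv⟩ := hMv'
    have hRHS : (∫ x, ((u₂ x + cs) * ρ₀ x + ∫ y, (v₂ y - cs) * ρ₁ y))
        = (∫ x, u₂ x * ρ₀ x) + cs := by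
      rw [hrhs0]
      simpa using hrhs1
    have hJ2 : sSup 𝒮 ≤ (∫ x, u₂ x * ρ₀ x) + cs := hS₂
    by_cases hI : Integrable (fun x => u x * ρ₀ x + ∫ y, v y * ρ₁ y)
    · have hconst : Integrable (fun _ : EuclideanSpace ℝ (Fin d) => ∫ y, v y * ρ₁ y) := by
        have h2 := hI.sub (hint u ρ₀ hu hρ₀_int Mu hMu)
        have he : ((fun x => u x * ρ₀ x + ∫ y, v y * ρ₁ y) - fun x => u x * ρ₀ x)
            = fun _ : EuclideanSpace ℝ (Fin d) => (∫ y, v y * ρ₁ y) := by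
          funext x; simp
        rwa [he] at h2
      rcases integrable_const_iff.1 hconst with hzero | hfin
      · calc (∫ x, (u x * ρ₀ x + ∫ y, v y * ρ₁ y)) = ∫ x, u x * ρ₀ x := by
              simp only [hzero, add_zero]
          _ = (∫ x, u x * ρ₀ x) + (∫ y, v y * ρ₁ y) := by rw [hzero, add_zero]
          _ ≤ sSup 𝒮 := key1 u v Mu Mv hu hv hMu hMv hfeas
          _ ≤ (∫ x, u₂ x * ρ₀ x) + cs := hJ2
          _ = _ := hRHS.symm
      · have hone : volume (univ : Set (EuclideanSpace ℝ (Fin d))) = 1 := by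
          rcases Nat.eq_zero_or_pos d with rfl | hd
          · rw [volume_univ_euclidean]; simp
          · exfalso
            replace hfin := hfin.measure_univ_lt_top
            rw [volume_univ_euclidean d, ENNReal.top_pow hd.ne'] at hfin
            exact lt_irrefl _ hfin
        calc (∫ x, (u x * ρ₀ x + ∫ y, v y * ρ₁ y))
            = (∫ x, u x * ρ₀ x) + (∫ y, v y * ρ₁ y) := by
              rw [integral_add (hint u ρ₀ hu hρ₀_int Mu hMu) hconst, integral_const, measureReal_def, hone]
              simp
          _ ≤ sSup 𝒮 := key1 u v Mu Mv hu hv hMu hMv hfeas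
          _ ≤ (∫ x, u₂ x * ρ₀ x) + cs := hJ2
          _ = _ := hRHS.symm
    · rw [integral_undef hI]
      calc (0:ℝ) ≤ sSup 𝒮 := hS0
        _ ≤ (∫ x, u₂ x * ρ₀ x) + cs := hJ2
        _ = _ := hRHS.symm
  · -- first conjugacy
    intro x
    have h1 : fc p (fun y => v₂ y - cs) = fun x => fc p v₂ x + cs := fc_sub_const hp hv₂b cs
    have h2 : (⨅ y : EuclideanSpace ℝ (Fin d), (‖x - y‖ ^ p / p - (v₂ y - cs)))
        = fc p (fun y => v₂ y - cs) x := by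
      rw [fc]
      exact iInf_congr fun y => by rw [norm_sub_rev]
    rw [h2, h1]
    simp only
    rw [hconjB]
  · -- second conjugacy
    intro y
    have h1 : fc p (fun x => u₂ x + cs) = fun z => fc p u₂ z - cs := by
      have := fc_sub_const hp hu₂b (-cs)
      simp only [sub_neg_eq_add] at this
      rw [this]
      funext z
      rw [sub_eq_add_neg]
    have h2 : (⨅ x : EuclideanSpace ℝ (Fin d), (‖x - y‖ ^ p / p - (u₂ x + cs)))
        = fc p (fun x => u₂ x + cs) y := by rw [fc]
    rw [h2, h1]
    simp only
    rw [hconjA]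
end

section
/- Let C ≥ 0 and let φ : ℝ^d → ℝ be Lipschitz and satisfy φ(x+z) − 2φ(x) + φ(x−z) ≥ −C|z|² for all x, z ∈ ℝ^d. Let ∇φ denote its almost-everywhere defined gradient (Rademacher's theorem). Then for every nonnegative smooth compactly supported ψ : ℝ^d → ℝ, ∫_{ℝ^d} ∇φ(x)·∇ψ(x) dx ≤ d·C ∫_{ℝ^d} ψ(x) dx, where d is the dimension. -/
open MeasureTheory Set Filter Topology
open scoped RealInnerProductSpace

section Helpers

lemma diffquot_tendsto' {E : Type*} [NormedAddCommGroup E] [NormedSpace ℝ E]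
    (f : E → ℝ) (x v : E) (hf : DifferentiableAt ℝ f x) :
    Tendsto (fun h : ℝ => (f x - f (x - h • v)) / h) (𝓝[>] (0:ℝ))
      (𝓝 (fderiv ℝ f x v)) := by
  have hc : HasDerivAt (fun t : ℝ => x - t • v) (-v) 0 := by
    simpa using ((hasDerivAt_id (0:ℝ)).smul_const v).const_sub x
  have hfd : HasFDerivAt f (fderiv ℝ f x) ((fun t : ℝ => x - t • v) 0) := by
    simpa using hf.hasFDerivAt
  have hg : HasDerivAt (fun t : ℝ => f (x - t • v)) (-(fderiv ℝ f x v)) 0 := by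
    have := hfd.comp_hasDerivAt 0 hc
    rw [map_neg] at this; exact this
  have hs := hasDerivAt_iff_tendsto_slope.1 hg
  have key : Tendsto (fun h : ℝ => (f x - f (x - h • v)) / h) (𝓝[≠] (0:ℝ))
      (𝓝 (fderiv ℝ f x v)) := by
    have hn := hs.neg
    rw [neg_neg] at hn
    refine hn.congr fun h => ?_
    simp only [slope, vsub_eq_sub, sub_zero, neg_div]
    simp [div_eq_inv_mul]
    ring
  exact key.mono_left (nhdsWithin_mono _ fun y hy => ne_of_gt hy)

lemma fderiv_eq_inner_grad' {d : ℕ} (f : EuclideanSpace ℝ (Fin d) → ℝ)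
    (x w : EuclideanSpace ℝ (Fin d)) :
    fderiv ℝ f x w = ⟪gradient f x, w⟫ := by
  rw [gradient, ← InnerProductSpace.toDual_apply_apply,
    (InnerProductSpace.toDual ℝ _).apply_symm_apply]

lemma grad_coord' {d : ℕ} (f : EuclideanSpace ℝ (Fin d) → ℝ)
    (x : EuclideanSpace ℝ (Fin d)) (i : Fin d) :
    gradient f x i = fderiv ℝ f x (EuclideanSpace.single i (1:ℝ)) := by
  rw [fderiv_eq_inner_grad', EuclideanSpace.inner_single_right]
  simp

lemma inner_grad_sum' {d : ℕ} (f g : EuclideanSpace ℝ (Fin d) → ℝ)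
    (x : EuclideanSpace ℝ (Fin d)) :
    ⟪gradient f x, gradient g x⟫ =
      ∑ i : Fin d, fderiv ℝ f x (EuclideanSpace.single i (1:ℝ)) *
        fderiv ℝ g x (EuclideanSpace.single i (1:ℝ)) := by
  rw [PiLp.inner_apply]
  exact Finset.sum_congr rfl fun i _ => by
    rw [grad_coord', grad_coord']; simp [RCLike.inner_apply]; ring

variable {d : ℕ}
local notation "Euc" => EuclideanSpace ℝ (Fin d)

lemma key_integrable' (φ ψ : Euc → ℝ) (hφ : Continuous φ) (hψ : Continuous ψ)
    (hψc : HasCompactSupport ψ) (a b : Euc) :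
    Integrable (fun x => φ (x + a) * ψ (x + b)) := by
  have hcs : HasCompactSupport (fun x : Euc => ψ (x + b)) :=
    hψc.comp_homeomorph (Homeomorph.addRight b)
  have hcs2 : HasCompactSupport (fun x : Euc => φ (x + a) * ψ (x + b)) :=
    HasCompactSupport.mul_left hcs
  exact Continuous.integrable_of_hasCompactSupport
    ((hφ.comp (continuous_id.add continuous_const)).mul
      (hψ.comp (continuous_id.add continuous_const))) hcs2

lemma key_identity' (φ ψ : Euc → ℝ) (hφ : Continuous φ) (hψ : Continuous ψ)
    (hψc : HasCompactSupport ψ) (v : Euc) :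
    ∫ x, (φ x - φ (x - v)) * (ψ x - ψ (x - v)) =
      -∫ x, (φ (x + v) - 2 * φ x + φ (x - v)) * ψ x := by
  have hint : ∀ a b : Euc, Integrable (fun x => φ (x + a) * ψ (x + b)) :=
    key_integrable' φ ψ hφ hψ hψc
  have tr : ∀ a b : Euc, ∫ x, φ (x + a) * ψ (x + b) = ∫ x, φ (x + (a - b)) * ψ x := by
    intro a b
    have := integral_add_right_eq_self (μ := (volume : Measure Euc))
      (fun x => φ (x + (a - b)) * ψ x) b
    rw [← this]
    congr 1; funext x; congr 2 <;> abel_nf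
  have e1 : (fun x : Euc => (φ x - φ (x - v)) * (ψ x - ψ (x - v))) =
      fun x => (φ (x + 0) * ψ (x + 0) - φ (x + 0) * ψ (x + -v)) -
        (φ (x + -v) * ψ (x + 0) - φ (x + -v) * ψ (x + -v)) := by
    funext x; simp only [add_zero, sub_eq_add_neg]; ring
  have e2 : (fun x : Euc => (φ (x + v) - 2 * φ x + φ (x - v)) * ψ x) =
      fun x => (φ (x + v) * ψ (x + 0) - 2 * (φ (x + 0) * ψ (x + 0))) +
        φ (x + -v) * ψ (x + 0) := by
    funext x; simp only [add_zero, sub_eq_add_neg]; ring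
  have i1 : Integrable (fun x : Euc => φ (x + 0) * ψ (x + 0) - φ (x + 0) * ψ (x + -v)) :=
    (hint 0 0).sub (hint 0 (-v))
  have i2 : Integrable (fun x : Euc => φ (x + -v) * ψ (x + 0) - φ (x + -v) * ψ (x + -v)) :=
    (hint (-v) 0).sub (hint (-v) (-v))
  have i3 : Integrable (fun x : Euc => 2 * (φ (x + 0) * ψ (x + 0))) := (hint 0 0).const_mul 2
  have i4 : Integrable (fun x : Euc => φ (x + v) * ψ (x + 0) - 2 * (φ (x + 0) * ψ (x + 0))) :=
    (hint v 0).sub i3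
  rw [e1, e2, integral_sub i1 i2, integral_sub (hint 0 0) (hint 0 (-v)),
    integral_sub (hint (-v) 0) (hint (-v) (-v)),
    integral_add i4 (hint (-v) 0), integral_sub (hint v 0) i3,
    MeasureTheory.integral_const_mul]
  rw [tr 0 (-v), tr (-v) (-v)]
  simp only [zero_sub, neg_neg, sub_self, add_zero]
  ring

end Helpers

/-- If `φ : ℝ^d → ℝ` is Lipschitz and satisfies the semiconvexity
inequality `φ(x+z) - 2φ(x) + φ(x-z) ≥ -C|z|²`, then its a.e. gradient satisfies
`∫ ∇φ·∇ψ ≤ d C ∫ ψ` for every nonnegative smooth compactly supported `ψ`. -/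
theorem semiconvex_gradient_ibp_bound
    (d : ℕ) (C : ℝ) (hC : 0 ≤ C)
    (φ : EuclideanSpace ℝ (Fin d) → ℝ)
    (L : NNReal) (hL : LipschitzWith L φ)
    (hsc : ∀ x z : EuclideanSpace ℝ (Fin d),
      φ (x + z) - 2 * φ x + φ (x - z) ≥ -C * ‖z‖ ^ 2) :
    ∀ ψ : EuclideanSpace ℝ (Fin d) → ℝ,
      ContDiff ℝ (⊤ : ℕ∞) ψ → HasCompactSupport ψ → (∀ x, 0 ≤ ψ x) →
      ∫ x, ⟪gradient φ x, gradient ψ x⟫ ≤ (d : ℝ) * C * ∫ x, ψ x := by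
  classical
  intro ψ hψ hψc hψ0
  let e : Fin d → EuclideanSpace ℝ (Fin d) := fun i => EuclideanSpace.single i (1:ℝ)
  have hne : ∀ i, ‖e i‖ = 1 := fun i => by simp [e]
  have hφcont : Continuous φ := hL.continuous
  have hψcont : Continuous ψ := hψ.continuous
  have hψdiff : Differentiable ℝ ψ := hψ.differentiable (by simp)
  have hψint : Integrable ψ := hψcont.integrable_of_hasCompactSupport hψc
  -- Lipschitz constant for ψ
  obtain ⟨M0, hM0⟩ := (hψc.fderiv (𝕜 := ℝ)).exists_bound_of_continuous (hψ.continuous_fderiv (by simp))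
  set M : NNReal := ⟨max M0 0, le_max_right _ _⟩ with hMdef
  have hMlip : LipschitzWith M ψ :=
    lipschitzWith_of_nnnorm_fderiv_le hψdiff
      (fun x => by
        rw [← NNReal.coe_le_coe, coe_nnnorm]
        exact (hM0 x).trans (le_max_left _ _))
  -- difference quotient bounds
  have quotbd : ∀ (f : EuclideanSpace ℝ (Fin d) → ℝ) (K : NNReal), LipschitzWith K f →
      ∀ (h : ℝ), 0 < h → ∀ x (i : Fin d), |(f x - f (x - h • e i)) / h| ≤ K := by
    intro f K hK h hh x i
    rw [abs_div, abs_of_pos hh, div_le_iff₀ hh]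
    have := hK.dist_le_mul x (x - h • e i)
    rw [Real.dist_eq, dist_eq_norm] at this
    calc |f x - f (x - h • e i)| ≤ K * ‖x - (x - h • e i)‖ := this
      _ = K * h := by rw [sub_sub_cancel, norm_smul, hne i]; simp [abs_of_pos hh]
  -- the family of approximations
  set F : ℝ → EuclideanSpace ℝ (Fin d) → ℝ := fun h x =>
    ∑ i : Fin d, ((φ x - φ (x - h • e i)) / h) * ((ψ x - ψ (x - h • e i)) / h) with hF
  -- the compact set
  set K : Set (EuclideanSpace ℝ (Fin d)) := Metric.cthickening 1 (tsupport ψ) with hKdef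
  have hKcomp : IsCompact K := hψc.cthickening
  have hKmeas : MeasurableSet K := Metric.isClosed_cthickening.measurableSet
  have hsupp : ∀ (h : ℝ), 0 < h → h ≤ 1 → ∀ x, x ∉ K → ∀ i : Fin d,
      ψ x = 0 ∧ ψ (x - h • e i) = 0 := by
    intro h hh hh1 x hx i
    constructor
    · by_contra hne0
      exact hx (Metric.self_subset_cthickening _ (subset_tsupport ψ hne0))
    · by_contra hne0
      apply hx
      refine Metric.mem_cthickening_of_dist_le x (x - h • e i) 1 _ (subset_tsupport ψ hne0) ?_
      rw [dist_eq_norm, sub_sub_cancel, norm_smul, hne i]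
      simpa [abs_of_pos hh] using hh1
  -- domination bound
  set bound : EuclideanSpace ℝ (Fin d) → ℝ :=
    K.indicator (fun _ => (d : ℝ) * ((L : ℝ) * (M : ℝ))) with hbdef
  have hbound_int : Integrable bound := by
    rw [hbdef]
    exact (integrable_indicator_iff hKmeas).2
      (integrableOn_const hKcomp.measure_lt_top.ne)
  -- limit function
  set G : EuclideanSpace ℝ (Fin d) → ℝ := fun x =>
    ∑ i : Fin d, fderiv ℝ φ x (e i) * fderiv ℝ ψ x (e i) with hG
  -- convergence of integrals
  have hTend : Tendsto (fun h => ∫ x, F h x) (𝓝[>] (0:ℝ)) (𝓝 (∫ x, G x)) := by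
    apply tendsto_integral_filter_of_dominated_convergence bound
    · filter_upwards [self_mem_nhdsWithin] with h hh
      apply Continuous.aestronglyMeasurable
      apply continuous_finset_sum
      intro i _
      exact ((hφcont.sub (hφcont.comp (continuous_id.sub continuous_const))).div_const h).mul
        ((hψcont.sub (hψcont.comp (continuous_id.sub continuous_const))).div_const h)
    · filter_upwards [Ioc_mem_nhdsGT_of_mem (Set.left_mem_Ico.2 zero_lt_one)] with h hh
      refine Eventually.of_forall fun x => ?_
      by_cases hx : x ∈ K
      · have : bound x = (d : ℝ) * ((L : ℝ) * (M : ℝ)) := by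
          rw [hbdef, Set.indicator_of_mem hx]
        rw [this]
        calc ‖F h x‖ ≤ ∑ i : Fin d,
              ‖((φ x - φ (x - h • e i)) / h) * ((ψ x - ψ (x - h • e i)) / h)‖ :=
            norm_sum_le _ _
          _ ≤ ∑ _i : Fin d, (L : ℝ) * (M : ℝ) := by
            refine Finset.sum_le_sum fun i _ => ?_
            rw [norm_mul]
            exact mul_le_mul (quotbd φ L hL h hh.1 x i) (quotbd ψ M hMlip h hh.1 x i)
              (norm_nonneg _) L.coe_nonneg
          _ = (d : ℝ) * ((L : ℝ) * (M : ℝ)) := by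
            rw [Finset.sum_const, Finset.card_univ, Fintype.card_fin, nsmul_eq_mul]
      · have hzero : F h x = 0 := by
          rw [hF]
          refine Finset.sum_eq_zero fun i _ => ?_
          obtain ⟨h1, h2⟩ := hsupp h hh.1 hh.2 x hx i
          rw [h1, h2]; ring
        rw [hzero, hbdef, Set.indicator_of_notMem hx]
        simp
    · exact hbound_int
    · filter_upwards [hL.ae_differentiableAt (μ := volume)] with x hx
      rw [hG, hF]
      exact tendsto_finset_sum _ fun i _ =>
        (diffquot_tendsto' φ x (e i) hx).mul (diffquot_tendsto' ψ x (e i) (hψdiff x))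
  -- rewriting the target integral
  have hEq : ∫ x, ⟪gradient φ x, gradient ψ x⟫ = ∫ x, G x := by
    congr 1; funext x; rw [hG]; exact inner_grad_sum' φ ψ x
  rw [hEq]
  -- the inequality for each h > 0
  have hineq : ∀ h : ℝ, 0 < h → ∫ x, F h x ≤ (d : ℝ) * C * ∫ x, ψ x := by
    intro h hh
    have hint : ∀ a b : EuclideanSpace ℝ (Fin d), Integrable (fun x => φ (x + a) * ψ (x + b)) :=
      key_integrable' φ ψ hφcont hψcont hψc
    have hP : ∀ v : EuclideanSpace ℝ (Fin d),
        Integrable (fun x => (φ x - φ (x - v)) * (ψ x - ψ (x - v))) := by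
      intro v
      have := ((hint 0 0).sub (hint 0 (-v))).sub ((hint (-v) 0).sub (hint (-v) (-v)))
      refine this.congr (Eventually.of_forall fun x => ?_)
      simp only [Pi.sub_apply, Pi.add_apply, Pi.neg_apply, add_zero, sub_eq_add_neg]; ring
    have hSD : ∀ v : EuclideanSpace ℝ (Fin d),
        Integrable (fun x => (φ (x + v) - 2 * φ x + φ (x - v)) * ψ x) := by
      intro v
      have := ((hint v 0).sub ((hint 0 0).const_mul 2)).add (hint (-v) 0)
      refine this.congr (Eventually.of_forall fun x => ?_)
      simp only [Pi.sub_apply, Pi.add_apply, Pi.neg_apply, add_zero, sub_eq_add_neg]; ring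
    have hFi : ∀ i : Fin d,
        Integrable (fun x => ((φ x - φ (x - h • e i)) / h) * ((ψ x - ψ (x - h • e i)) / h)) := by
      intro i
      have := (hP (h • e i)).mul_const (1 / h ^ 2)
      refine this.congr (Eventually.of_forall fun x => ?_)
      field_simp
    have hsum : ∫ x, F h x = ∑ i : Fin d,
        ∫ x, ((φ x - φ (x - h • e i)) / h) * ((ψ x - ψ (x - h • e i)) / h) := by
      rw [hF]; exact integral_finset_sum _ fun i _ => hFi i
    rw [hsum]
    have hterm : ∀ i : Fin d,
        ∫ x, ((φ x - φ (x - h • e i)) / h) * ((ψ x - ψ (x - h • e i)) / h) ≤ C * ∫ x, ψ x := by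
      intro i
      set v : EuclideanSpace ℝ (Fin d) := h • e i with hv
      have hnv : ‖v‖ = h := by rw [hv, norm_smul, hne i]; simp [abs_of_pos hh]
      have hrw : (fun x => ((φ x - φ (x - v)) / h) * ((ψ x - ψ (x - v)) / h)) =
          fun x => (1 / h ^ 2) * ((φ x - φ (x - v)) * (ψ x - ψ (x - v))) := by
        funext x; field_simp
      rw [hrw, MeasureTheory.integral_const_mul, key_identity' φ ψ hφcont hψcont hψc v]
      have hle : -∫ x, (φ (x + v) - 2 * φ x + φ (x - v)) * ψ x ≤ C * h ^ 2 * ∫ x, ψ x := by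
        rw [← MeasureTheory.integral_neg, ← MeasureTheory.integral_const_mul]
        refine integral_mono ((hSD v).neg) (hψint.const_mul _) fun x => ?_
        have h1 := hsc x v
        rw [hnv] at h1
        have h2 : -(φ (x + v) - 2 * φ x + φ (x - v)) ≤ C * h ^ 2 := by linarith
        calc -((φ (x + v) - 2 * φ x + φ (x - v)) * ψ x)
            = -(φ (x + v) - 2 * φ x + φ (x - v)) * ψ x := by ring
          _ ≤ (C * h ^ 2) * ψ x := mul_le_mul_of_nonneg_right h2 (hψ0 x)
      calc (1 / h ^ 2) * -(∫ x, (φ (x + v) - 2 * φ x + φ (x - v)) * ψ x)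
          ≤ (1 / h ^ 2) * (C * h ^ 2 * ∫ x, ψ x) :=
            mul_le_mul_of_nonneg_left hle (by positivity)
        _ = C * ∫ x, ψ x := by field_simp
    calc (∑ i : Fin d, ∫ x, ((φ x - φ (x - h • e i)) / h) * ((ψ x - ψ (x - h • e i)) / h))
        ≤ ∑ _i : Fin d, C * ∫ x, ψ x := Finset.sum_le_sum fun i _ => hterm i
      _ = (d : ℝ) * C * ∫ x, ψ x := by
          rw [Finset.sum_const, Finset.card_univ, Fintype.card_fin, nsmul_eq_mul]; ring
  exact le_of_tendsto hTend
    (eventually_nhdsWithin_of_forall fun h hh => hineq h hh)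
end

section
/- Let p ∈ (1,∞), let v : ℝ^d → ℝ be bounded and Lipschitz, and let h : ℝ^d → ℝ be continuous with compact support. For w : ℝ^d → ℝ define Φ_w(x) = sup_{y∈ℝ^d} ( w(y) − |x−y|^p/p ). Then there exists a constant M (depending on v, h, p, d) such that for all τ ∈ (0,1], ∫_{ℝ^d} |Φ_{v+τh}(x) − Φ_v(x)| dx ≤ M τ. -/
open MeasureTheory Set

/-- The value at time `0` of the Hopf–Lax solution for the cost `|z|^p/p`
with terminal datum `w`: `Φ_w(x) = sup_y ( w(y) - |x-y|^p/p )`. -/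
noncomputable def hopfLaxZero (d : ℕ) (p : ℝ)
    (w : EuclideanSpace ℝ (Fin d) → ℝ) (x : EuclideanSpace ℝ (Fin d)) : ℝ :=
  ⨆ y : EuclideanSpace ℝ (Fin d), (w y - ‖x - y‖ ^ p / p)

section Aux

variable {d : ℕ} {p : ℝ}

lemma hl_bdd (hp : 0 < p) {w : EuclideanSpace ℝ (Fin d) → ℝ} {A : ℝ}
    (hw : ∀ y, w y ≤ A) (x : EuclideanSpace ℝ (Fin d)) :
    BddAbove (Set.range fun y => w y - ‖x - y‖ ^ p / p) := by
  refine ⟨A, ?_⟩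
  rintro _ ⟨y, rfl⟩
  have h1 : 0 ≤ ‖x - y‖ ^ p / p :=
    div_nonneg (Real.rpow_nonneg (norm_nonneg _) p) hp.le
  have := hw y
  simp only
  linarith

lemma hl_le (hp : 0 < p) {w : EuclideanSpace ℝ (Fin d) → ℝ} {A : ℝ}
    (hw : ∀ y, w y ≤ A) (x : EuclideanSpace ℝ (Fin d)) :
    hopfLaxZero d p w x ≤ A :=
  ciSup_le fun y => by
    have h1 : 0 ≤ ‖x - y‖ ^ p / p :=
      div_nonneg (Real.rpow_nonneg (norm_nonneg _) p) hp.le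
    linarith [hw y]

lemma le_hl (hp : 0 < p) {w : EuclideanSpace ℝ (Fin d) → ℝ} {A : ℝ}
    (hw : ∀ y, w y ≤ A) (x : EuclideanSpace ℝ (Fin d)) :
    w x ≤ hopfLaxZero d p w x := by
  have := le_ciSup (hl_bdd hp hw x) x
  simp [sub_self, Real.zero_rpow hp.ne'] at this
  exact this

lemma hl_diff (hp : 0 < p) {w₁ w₂ : EuclideanSpace ℝ (Fin d) → ℝ} {A ε : ℝ}
    (h2 : ∀ y, w₂ y ≤ A) (hle : ∀ y, w₁ y ≤ w₂ y + ε) (x : EuclideanSpace ℝ (Fin d)) :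
    hopfLaxZero d p w₁ x ≤ hopfLaxZero d p w₂ x + ε :=
  ciSup_le fun y => by
    have := le_ciSup (hl_bdd hp h2 x) y
    have h3 := hle y
    show w₁ y - ‖x - y‖ ^ p / p ≤ hopfLaxZero d p w₂ x + ε
    have : w₂ y - ‖x - y‖ ^ p / p ≤ hopfLaxZero d p w₂ x := this
    linarith

end Aux

/-- `L¹` stability with rate `O(τ)` of the Hopf–Lax value at time
`0` for the cost `|z|^p/p` under perturbation of the datum by `τ h`, with `h`
continuous and compactly supported. -/
theorem hopfLaxZero_L1_stability
    (d : ℕ) (p : ℝ) (hp : 1 < p)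
    (v h : EuclideanSpace ℝ (Fin d) → ℝ) (B : ℝ) (L : NNReal)
    (hB : ∀ x, |v x| ≤ B) (hL : LipschitzWith L v)
    (hh_cont : Continuous h) (hh_supp : HasCompactSupport h) :
    ∃ M : ℝ, ∀ τ ∈ Ioc (0 : ℝ) 1,
      ∫ x, |hopfLaxZero d p (fun y => v y + τ * h y) x - hopfLaxZero d p v x|
        ≤ M * τ := by
  obtain ⟨C, hC⟩ := hh_supp.exists_bound_of_continuous hh_cont
  simp only [Real.norm_eq_abs] at hC
  have hC0 : 0 ≤ C := le_trans (abs_nonneg _) (hC 0)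
  have hB0 : 0 ≤ B := le_trans (abs_nonneg _) (hB 0)
  have hp0 : 0 < p := lt_trans one_pos hp
  set A : ℝ := B + C with hA
  have hA0 : 0 ≤ A := by positivity
  set R : ℝ := (2 * p * (A + 1)) ^ (1 / p) with hRdef
  have hR0 : 0 ≤ R := Real.rpow_nonneg (by positivity) _
  have hRp : R ^ p = 2 * p * (A + 1) := by
    rw [hRdef, ← Real.rpow_mul (by positivity : (0:ℝ) ≤ 2 * p * (A + 1)),
      one_div_mul_cancel hp0.ne', Real.rpow_one]
  set K : Set (EuclideanSpace ℝ (Fin d)) := Metric.cthickening R (tsupport h) with hKdef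
  have hKc : IsCompact K := hh_supp.cthickening
  have hKm : MeasurableSet K := hKc.isClosed.measurableSet
  clear_value A R K
  refine ⟨C * (volume K).toReal, ?_⟩
  rintro τ ⟨hτ0, hτ1⟩
  set w : EuclideanSpace ℝ (Fin d) → ℝ := fun y => v y + τ * h y with hw
  clear_value w
  -- bounds on v and w
  have hvA : ∀ y, v y ≤ A := fun y => by
    have := (abs_le.1 (hB y)).2; linarith
  have hwA : ∀ y, w y ≤ A := fun y => by
    have h1 := (abs_le.1 (hB y)).2
    have h2 : τ * h y ≤ C := by
      have := (abs_le.1 (hC y)).2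
      have := (abs_le.1 (hC y)).1
      nlinarith
    simp only [hw]; linarith
  -- pointwise difference bound
  have hdiff : ∀ x, |hopfLaxZero d p w x - hopfLaxZero d p v x| ≤ C * τ := by
    intro x
    rw [abs_le]
    constructor
    · have := hl_diff (w₁ := v) (w₂ := w) (ε := C * τ) hp0 hwA
        (fun y => by
          have h2 : -(τ * C) ≤ τ * h y := by
            have := (abs_le.1 (hC y)).1; nlinarith
          simp only [hw]; linarith) x
      linarith
    · have := hl_diff (w₁ := w) (w₂ := v) (ε := C * τ) hp0 hvA
        (fun y => by
          have h2 : τ * h y ≤ τ * C := by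
            have := (abs_le.1 (hC y)).2; nlinarith
          simp only [hw]; linarith) x
      linarith
  -- far-field equality
  have hfar : ∀ x ∉ K, hopfLaxZero d p w x = hopfLaxZero d p v x := by
    intro x hx
    have hdist : ∀ y ∈ tsupport h, R < dist x y := by
      intro y hy
      by_contra hle
      rw [hKdef] at hx
      exact hx (Metric.mem_cthickening_of_dist_le x y R _ hy (not_lt.1 hle))
    have hcost : ∀ y, h y ≠ 0 → 2 * (A + 1) < ‖x - y‖ ^ p / p := by
      intro y hy
      have hy' : y ∈ tsupport h := subset_tsupport h hy
      have h1 : R < ‖x - y‖ := by rw [← dist_eq_norm]; exact hdist y hy'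
      have h2 : R ^ p < ‖x - y‖ ^ p := Real.rpow_lt_rpow hR0 h1 hp0
      rw [hRp] at h2
      rw [lt_div_iff₀ hp0]
      nlinarith
    apply le_antisymm
    · refine ciSup_le fun y => ?_
      by_cases hy : h y = 0
      · have : w y - ‖x - y‖ ^ p / p = v y - ‖x - y‖ ^ p / p := by
          simp [hw, hy]
        rw [this]
        exact le_ciSup (hl_bdd hp0 hvA x) y
      · have h1 := hcost y hy
        have h2 : v x ≤ hopfLaxZero d p v x := le_hl hp0 hvA x
        have h3 := (abs_le.1 (hB x)).1
        have h4 := hwA y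
        linarith [hA, hC0, hB0]
    · refine ciSup_le fun y => ?_
      by_cases hy : h y = 0
      · have : v y - ‖x - y‖ ^ p / p = w y - ‖x - y‖ ^ p / p := by
          simp [hw, hy]
        rw [this]
        exact le_ciSup (hl_bdd hp0 hwA x) y
      · have h1 := hcost y hy
        have h2 : w x ≤ hopfLaxZero d p w x := le_hl hp0 hwA x
        have h3 := (abs_le.1 (hB x)).1
        have h3' : -(τ * C) ≤ τ * h x := by
          have := (abs_le.1 (hC x)).1; nlinarith
        have h4 := hvA y
        have h5 : -A ≤ w x := by simp only [hw]; nlinarith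
        linarith
    -- done
  -- integral estimate
  by_cases hint : Integrable (fun x => |hopfLaxZero d p w x - hopfLaxZero d p v x|) volume
  · have hmaj : Integrable (K.indicator fun _ => C * τ) volume :=
      (integrable_indicator_iff hKm).2
        (integrableOn_const hKc.measure_lt_top.ne)
    have hle : ∀ x, |hopfLaxZero d p w x - hopfLaxZero d p v x|
        ≤ K.indicator (fun _ => C * τ) x := by
      intro x
      by_cases hx : x ∈ K
      · rw [indicator_of_mem hx]; exact hdiff x
      · rw [indicator_of_notMem hx, hfar x hx, sub_self, abs_zero]
    calc ∫ x, |hopfLaxZero d p w x - hopfLaxZero d p v x|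
        ≤ ∫ x, K.indicator (fun _ => C * τ) x := integral_mono hint hmaj hle
      _ = (volume K).toReal • (C * τ) := by
          rw [integral_indicator_const _ hKm]; rfl
      _ ≤ C * (volume K).toReal * τ := le_of_eq (by rw [smul_eq_mul]; ring)
  · rw [integral_undef hint]
    have : 0 ≤ (volume K).toReal := ENNReal.toReal_nonneg
    positivity
end
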